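/- arXiv:1507.04681 — 2 statements merged into one kernel-verified Lean document; each statement's English description precedes it below -/
import Mathlib

section
/- Let (d_D) be a holomorphically contractible system and let D ⊆ ℂ^m be a bounded domain. Assume there exist sequences (E_n) and (I_n) of domains in ℂ^m such that E_{n+1} ⋐ E_n for all n and ⋂_n E_n = closure(D), and I_n ⋐ I_{n+1} for all n and ⋃_n I_n = D, and such that for every z, w ∈ D one has lim_{n→∞} d_{E_n}(z,w) = lim_{n→∞} d_{I_n}(z,w) = d_D(z,w). Let (D_n) be a sequence of bounded domains in ℂ^m such that the Hausdorff distance 𝔥(closure(D_n), closure(D)) tends to 0 as n → ∞, and such that for each compact set K ⊆ D there exists n₀ with K ⊆ D_n for all n ≥ n₀. Then for every z, w ∈ D, lim_{n→∞} d_{D_n}(z,w) = d_D(z,w) (the values d_{D_n}(z,w) being defined for all sufficiently large n). -/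
open Complex Metric Filter Bornology

noncomputable section

/-- `ℂⁿ` with the Euclidean norm. -/
abbrev Cn (n : ℕ) := EuclideanSpace ℂ (Fin n)

/-- A domain: a nonempty connected open set. -/
def IsCDomain {n : ℕ} (D : Set (Cn n)) : Prop := IsOpen D ∧ IsConnected D

/-- `A ⋐ B`: the closure of `A` is compact and contained in `B`. -/
def CpSub {n : ℕ} (A B : Set (Cn n)) : Prop := IsCompact (closure A) ∧ closure A ⊆ B

/-- The inverse hyperbolic tangent. -/
def arctanh (t : ℝ) : ℝ := (1 / 2) * Real.log ((1 + t) / (1 - t))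

/-- The Poincaré (hyperbolic) distance on the unit disc:
`p(z,w) = arctanh (|z - w| / |1 - conj z * w|)`. -/
def poincare (z w : ℂ) : ℝ :=
  arctanh (‖z - w‖ / ‖1 - (starRingEnd ℂ) z * w‖)

/-- The unit disc, regarded as a domain in `ℂ¹`. -/
def unitDisc1 : Set (Cn 1) := {z | ‖z‖ < 1}

/-- A holomorphically contractible system: a family of nonnegative functions `d n D`,
`D` running over all domains in `ℂⁿ` for all `n`, normalized by the Poincaré distance
on the unit disc, such that all holomorphic maps between domains are contractions. -/
structure HolContractibleSystem where
  d : ∀ n : ℕ, Set (Cn n) → Cn n → Cn n → ℝ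
  nonneg : ∀ (n : ℕ) (D : Set (Cn n)), IsCDomain D → ∀ z ∈ D, ∀ w ∈ D, 0 ≤ d n D z w
  normDisc : ∀ z ∈ unitDisc1, ∀ w ∈ unitDisc1, d 1 unitDisc1 z w = poincare (z 0) (w 0)
  contract : ∀ (n m : ℕ) (D : Set (Cn n)) (G : Set (Cn m)), IsCDomain D → IsCDomain G →
    ∀ f : Cn n → Cn m, DifferentiableOn ℂ f D → Set.MapsTo f D G →
    ∀ z ∈ D, ∀ w ∈ D, d m G (f z) (f w) ≤ d n D z w

/-!
A holomorphically contractible system is monotone under inclusion of domains, since the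
inclusion map is holomorphic. Once `Dn n` lies between `I k` and `E j`, the value
`d_{Dn n}(z,w)` is therefore squeezed between `d_{E j}(z,w)` and `d_{I k}(z,w)`, both of which
are close to `d_D(z,w)` for large `j`, `k`. Compact exhaustion puts `I k ⋐ D` inside `Dn n` for
large `n`, and Hausdorff convergence puts `Dn n` into any neighbourhood of the compact set
`closure D`, in particular into `E j ⊇ closure D`.
-/

open Topology

namespace HolContractibleSystem

theorem d_le_of_subset (S : HolContractibleSystem) {n : ℕ} {A B : Set (Cn n)}
    (hA : IsCDomain A) (hB : IsCDomain B) (hAB : A ⊆ B) {z w : Cn n} (hz : z ∈ A)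
    (hw : w ∈ A) : S.d n B z w ≤ S.d n A z w :=
  S.contract n n A B hA hB id differentiableOn_id hAB z hz w hw

end HolContractibleSystem

theorem tendsto_of_eventually_between_tendsto {α β γ : Type*} [TopologicalSpace γ] [Preorder γ]
    [OrderTopology γ] {la : Filter α} {lb lc : Filter β} [lb.NeBot] [lc.NeBot]
    {f : α → γ} {g h : β → γ} {c : γ} (hg : Tendsto g lb (𝓝 c)) (hh : Tendsto h lc (𝓝 c))
    (hgf : ∀ᶠ j in lb, ∀ᶠ n in la, g j ≤ f n) (hfh : ∀ᶠ k in lc, ∀ᶠ n in la, f n ≤ h k) :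
    Tendsto f la (𝓝 c) := by
  refine tendsto_order.2 ⟨fun a ha => ?_, fun b hb => ?_⟩
  · obtain ⟨j, hj, hgf⟩ := ((tendsto_order.1 hg).1 a ha |>.and hgf).exists
    exact hgf.mono fun n hn => hj.trans_le hn
  · obtain ⟨k, hk, hfh⟩ := ((tendsto_order.1 hh).2 b hb |>.and hfh).exists
    exact hfh.mono fun n hn => hn.trans_lt hk

theorem eventually_subset_of_tendsto_hausdorffDist {X ι : Type*} [PseudoMetricSpace X]
    {l : Filter ι} {A : ι → Set X} {K U : Set X} (hK : IsCompact K) (hU : IsOpen U)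
    (hKU : K ⊆ U) (hfin : ∀ n, hausdorffEDist (A n) K ≠ ⊤)
    (hA : Tendsto (fun n => hausdorffDist (A n) K) l (𝓝 0)) : ∀ᶠ n in l, A n ⊆ U := by
  obtain ⟨δ, hδ, hthick⟩ := hK.exists_thickening_subset_open hU hKU
  filter_upwards [(tendsto_order.1 hA).2 δ hδ] with n hn x hx
  refine hthick (mem_thickening_iff_infEDist_lt.2 ?_)
  calc infEDist x K ≤ hausdorffEDist (A n) K := infEDist_le_hausdorffEDist_of_mem hx
    _ = ENNReal.ofReal (hausdorffDist (A n) K) := (ENNReal.ofReal_toReal (hfin n)).symm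
    _ < ENNReal.ofReal δ := (ENNReal.ofReal_lt_ofReal_iff hδ).2 hn

theorem behaviour_under_hausdorff_convergence_general
    {m : ℕ} (S : HolContractibleSystem) (D : Set (Cn m))
    (hD : IsCDomain D) (hDb : IsBounded D)
    (E I : ℕ → Set (Cn m))
    (hEdom : ∀ n, IsCDomain (E n))
    (hEint : ⋂ n, E n = closure D)
    (hIdom : ∀ n, IsCDomain (I n)) (hIsub : ∀ n, CpSub (I n) (I (n + 1)))
    (hIun : ⋃ n, I n = D)
    (hEconv : ∀ z ∈ D, ∀ w ∈ D,
      Tendsto (fun n => S.d m (E n) z w) atTop (nhds (S.d m D z w)))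
    (hIconv : ∀ z ∈ D, ∀ w ∈ D,
      Tendsto (fun n => S.d m (I n) z w) atTop (nhds (S.d m D z w)))
    (Dn : ℕ → Set (Cn m))
    (hDn : ∀ n, IsCDomain (Dn n)) (hDnb : ∀ n, IsBounded (Dn n))
    (hH : Tendsto (fun n => hausdorffDist (closure (Dn n)) (closure D)) atTop (nhds 0))
    (hK : ∀ K : Set (Cn m), K ⊆ D → IsCompact K → ∃ n₀ : ℕ, ∀ n ≥ n₀, K ⊆ Dn n) :
    ∀ z ∈ D, ∀ w ∈ D,
      Tendsto (fun n => S.d m (Dn n) z w) atTop (nhds (S.d m D z w)) := by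
  intro z hz w hw
  have eventually_subset {K : Set (Cn m)} (hKD : K ⊆ D) (hKc : IsCompact K) :
      ∀ᶠ n in atTop, K ⊆ Dn n :=
    eventually_atTop.2 (hK K hKD hKc)
  have hzwD : ∀ᶠ n in atTop, {z, w} ⊆ Dn n :=
    eventually_subset (Set.insert_subset hz (Set.singleton_subset_iff.2 hw))
      (Set.toFinite _).isCompact
  refine tendsto_of_eventually_between_tendsto (hEconv z hz w hw) (hIconv z hz w hw)
    (Eventually.of_forall fun j => ?_) ?_
  · have hDnE : ∀ᶠ n in atTop, closure (Dn n) ⊆ E j :=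
      eventually_subset_of_tendsto_hausdorffDist hDb.isCompact_closure (hEdom j).1
        (hEint ▸ Set.iInter_subset E j)
        (fun n => hausdorffEDist_ne_top_of_nonempty_of_bounded (hDn n).2.1.closure
          hD.2.1.closure (hDnb n).closure hDb.closure) hH
    filter_upwards [hDnE, hzwD] with n hnE hnzw
    exact S.d_le_of_subset (hDn n) (hEdom j) (subset_closure.trans hnE)
      (hnzw (Set.mem_insert z _)) (hnzw (Set.mem_insert_of_mem z rfl))
  · have hImono : Monotone I := monotone_nat_of_le_succ fun n => subset_closure.trans (hIsub n).2
    have eventually_mem {x : Cn m} (hx : x ∈ D) : ∀ᶠ k in atTop, x ∈ I k := by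
      obtain ⟨k, hk⟩ := Set.mem_iUnion.1 (hIun ▸ hx)
      exact (eventually_ge_atTop k).mono fun n hn => hImono hn hk
    filter_upwards [eventually_mem hz, eventually_mem hw] with k hzk hwk
    have hIkD : closure (I k) ⊆ D := (hIsub k).2.trans (hIun ▸ Set.subset_iUnion I (k + 1))
    filter_upwards [eventually_subset hIkD (hIsub k).1] with n hn
    exact S.d_le_of_subset (hIdom k) (hDn n) (subset_closure.trans hn) hzk hwk

/-- **Theorem 1.1.** Let `(d_D)` be a holomorphically contractible system and `D ⊆ ℂ^m` a
bounded domain. Suppose `(E n)` is a sequence of domains with `E (n+1) ⋐ E n` and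
`⋂ n, E n = closure D`, and `(I n)` is a sequence of domains with `I n ⋐ I (n+1)` and
`⋃ n, I n = D`, along which `d` converges to `d_D` pointwise on `D × D`. If `(Dn n)` is a
sequence of bounded domains with `𝔥(closure (Dn n), closure D) → 0` and eventually containing
every compact subset of `D`, then `d_{Dn n}(z,w) → d_D(z,w)` for all `z, w ∈ D`. -/
theorem behaviour_under_hausdorff_convergence
    {m : ℕ} (S : HolContractibleSystem) (D : Set (Cn m))
    (hD : IsCDomain D) (hDb : IsBounded D)
    (E I : ℕ → Set (Cn m))
    (hEdom : ∀ n, IsCDomain (E n)) (hEsub : ∀ n, CpSub (E (n + 1)) (E n))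
    (hEint : ⋂ n, E n = closure D)
    (hIdom : ∀ n, IsCDomain (I n)) (hIsub : ∀ n, CpSub (I n) (I (n + 1)))
    (hIun : ⋃ n, I n = D)
    (hEconv : ∀ z ∈ D, ∀ w ∈ D,
      Tendsto (fun n => S.d m (E n) z w) atTop (nhds (S.d m D z w)))
    (hIconv : ∀ z ∈ D, ∀ w ∈ D,
      Tendsto (fun n => S.d m (I n) z w) atTop (nhds (S.d m D z w)))
    (Dn : ℕ → Set (Cn m))
    (hDn : ∀ n, IsCDomain (Dn n)) (hDnb : ∀ n, IsBounded (Dn n))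
    (hH : Tendsto (fun n => hausdorffDist (closure (Dn n)) (closure D)) atTop (nhds 0))
    (hK : ∀ K : Set (Cn m), K ⊆ D → IsCompact K → ∃ n₀ : ℕ, ∀ n ≥ n₀, K ⊆ Dn n) :
    ∀ z ∈ D, ∀ w ∈ D,
      Tendsto (fun n => S.d m (Dn n) z w) atTop (nhds (S.d m D z w)) :=
  behaviour_under_hausdorff_convergence_general S D hD hDb E I hEdom hEint hIdom hIsub hIun hEconv
    hIconv Dn hDn hDnb hH hK
end
end

section
/- Let D ⊆ ℂ^m be a bounded domain. Assume there exist sequences (E_n) and (I_n) of domains in ℂ^m such that E_{n+1} ⋐ E_n for all n and ⋂_n E_n = closure(D), and I_n ⋐ I_{n+1} for all n and ⋃_n I_n = D. Let (D_n) be a sequence of bounded domains in ℂ^m such that the Hausdorff distance 𝔥(closure(D_n), closure(D)) tends to 0 as n → ∞, and such that for each compact set K ⊆ D there exists n₀ with K ⊆ D_n for all n ≥ n₀. Then there exist m₁ ∈ ℕ and two sequences (L_n), (U_n) of domains in ℂ^m such that: L_n ⊆ L_{n+1} for all n, ⋃_n L_n = D, U_{n+1} ⋐ U_n for all n, ⋂_n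 U_n = closure(D), and L_n ⊆ D_{m₁+n−1} ⊆ U_n for every n ∈ ℕ. -/
open Complex Metric Filter Bornology

noncomputable section

/-! Choose thresholds `g j` with `closure (I j) ⊆ Dn k` for `k ≥ g j` (each `closure (I j)` is a
compact subset of `D`) and put `m₁ = g 0`. The inner sequence is the slowed-down reindexing
`I (a n)`, where `a n` is the largest `j ≤ n` with `g j ≤ m₁ + n`. The outer sequence consists of
the thickenings of `closure D` by radii that decrease strictly to `0` and exceed the Hausdorff
distances `𝔥(closure (Dn (m₁ + n)), closure D)`; the tail suprema of these distances plus `2⁻ⁿ`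
will do. -/

lemma exists_strictAnti_tendsto_zero_gt {δ : ℕ → ℝ} (hδ : Tendsto δ atTop (nhds 0)) :
    ∃ e : ℕ → ℝ, StrictAnti e ∧ Tendsto e atTop (nhds 0) ∧ ∀ n, δ n < e n := by
  obtain ⟨C, hC⟩ := hδ.bddAbove_range
  set s : ℕ → ℝ := fun n => ⨆ k, δ (n + k)
  have hbdd : ∀ n, BddAbove (Set.range fun k => δ (n + k)) :=
    fun n => ⟨C, by rintro _ ⟨k, rfl⟩; exact hC ⟨_, rfl⟩⟩
  have hδs : ∀ n, δ n ≤ s n := fun n => le_ciSup (hbdd n) 0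
  have hs_anti : Antitone s := antitone_nat_of_succ_le fun n =>
    ciSup_le fun k => by rw [add_assoc]; exact le_ciSup (hbdd n) (1 + k)
  have hs : Tendsto s atTop (nhds 0) := by
    refine tendsto_order.2 ⟨fun a ha => (hδ.eventually (lt_mem_nhds ha)).mono
      fun n hn => hn.trans_le (hδs n), fun a ha => ?_⟩
    obtain ⟨b, hb, hba⟩ := exists_between ha
    obtain ⟨N, hN⟩ := eventually_atTop.1 (hδ.eventually (gt_mem_nhds hb))
    exact eventually_atTop.2 ⟨N, fun n hn =>
      (ciSup_le fun k => (hN (n + k) (by omega)).le).trans_lt hba⟩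
  refine ⟨fun n => s n + (1 / 2) ^ n, strictAnti_nat_of_succ_lt fun n => ?_, ?_,
    fun n => lt_add_of_le_of_pos (hδs n) (by positivity)⟩
  · exact add_lt_add_of_le_of_lt (hs_anti n.le_succ)
      (pow_lt_pow_right_of_lt_one₀ (by norm_num) (by norm_num) n.lt_succ_self)
  · simpa using hs.add (tendsto_pow_atTop_nhds_zero_of_lt_one (r := (1 / 2 : ℝ)) (by norm_num)
      (by norm_num))

lemma exists_monotone_tendsto_atTop_le_add (g : ℕ → ℕ) :
    ∃ a : ℕ → ℕ, Monotone a ∧ Tendsto a atTop atTop ∧ ∀ n, g (a n) ≤ g 0 + n := by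
  refine ⟨fun n => Nat.findGreatest (fun j => g j ≤ g 0 + n) n, fun n k hnk => ?_, ?_,
    fun n => Nat.findGreatest_spec (P := fun j => g j ≤ g 0 + n) n.zero_le (by omega)⟩
  · exact Nat.findGreatest_mono (fun j hj => hj.trans (by omega)) hnk
  · exact tendsto_atTop_atTop.2 fun v => ⟨max v (g v), fun n hn =>
      Nat.le_findGreatest (le_of_max_le_left hn) (by omega)⟩

lemma IsConnected.thickening {E : Type*} [SeminormedAddCommGroup E] [NormedSpace ℝ E]
    {S : Set E} (hS : IsConnected S) {r : ℝ} (hr : 0 < r) : IsConnected (thickening r S) := by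
  obtain ⟨x, hx⟩ := hS.nonempty
  refine ⟨⟨x, self_subset_thickening hr S hx⟩, isPreconnected_of_forall x fun y hy => ?_⟩
  obtain ⟨z, hz, hyz⟩ := mem_thickening_iff.1 hy
  exact ⟨S ∪ ball z r, Set.union_subset (self_subset_thickening hr S) (ball_subset_thickening hz r),
    Or.inl hx, Or.inr hyz,
    hS.isPreconnected.union z hz (mem_ball_self hr) (convex_ball z r).isPreconnected⟩

lemma iInter_thickening_eq_closure {α : Type*} [PseudoMetricSpace α] {e : ℕ → ℝ}
    (hpos : ∀ n, 0 < e n) (he : Tendsto e atTop (nhds 0)) (S : Set α) :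
    ⋂ n, thickening (e n) S = closure S := by
  refine subset_antisymm ?_ (Set.subset_iInter fun n => closure_subset_thickening (hpos n) S)
  rw [closure_eq_iInter_thickening]
  refine Set.subset_iInter₂ fun r hr => ?_
  obtain ⟨n, hn⟩ := (he.eventually (gt_mem_nhds hr)).exists
  exact (Set.iInter_subset _ n).trans (thickening_mono hn.le S)

lemma subset_thickening_of_hausdorffDist_lt {α : Type*} [PseudoMetricSpace α] {s t : Set α}
    (hs : IsBounded s) (ht : IsBounded t) (ht₀ : t.Nonempty) {r : ℝ}
    (h : hausdorffDist s t < r) : s ⊆ thickening r t := by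
  intro x hx
  have hfin := hausdorffEDist_ne_top_of_nonempty_of_bounded ⟨x, hx⟩ ht₀ hs ht
  exact mem_thickening_iff.2 (exists_dist_lt_of_hausdorffDist_lt hx h hfin)

lemma isCDomain_thickening_closure {m : ℕ} {D : Set (Cn m)} (hD : IsCDomain D) {r : ℝ}
    (hr : 0 < r) : IsCDomain (thickening r (closure D)) :=
  ⟨isOpen_thickening, hD.2.closure.thickening hr⟩

lemma cpSub_thickening {m : ℕ} {S : Set (Cn m)} (hS : IsBounded S) {r r' : ℝ} (hr : 0 < r)
    (h : r' < r) : CpSub (thickening r' S) (thickening r S) :=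
  ⟨hS.thickening.isCompact_closure,
    (closure_thickening_subset_cthickening r' S).trans (cthickening_subset_thickening' hr h S)⟩

/-- Indexing is `0`-based: `L n ⊆ Dn (m₁ + n)` is the paper's `L_n ⊆ D_{m₁+n-1}`. -/
theorem exists_squeezing_sequences_general
    {m : ℕ} (D : Set (Cn m)) (hD : IsCDomain D) (hDb : IsBounded D)
    (I : ℕ → Set (Cn m))
    (hIdom : ∀ n, IsCDomain (I n)) (hIsub : ∀ n, CpSub (I n) (I (n + 1)))
    (hIun : ⋃ n, I n = D)
    (Dn : ℕ → Set (Cn m))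
    (hDnb : ∀ n, IsBounded (Dn n))
    (hH : Tendsto (fun n => hausdorffDist (closure (Dn n)) (closure D)) atTop (nhds 0))
    (hK : ∀ K : Set (Cn m), K ⊆ D → IsCompact K → ∃ n₀ : ℕ, ∀ n ≥ n₀, K ⊆ Dn n) :
    ∃ (m₁ : ℕ) (L U : ℕ → Set (Cn m)),
      (∀ n, IsCDomain (L n)) ∧ (∀ n, IsCDomain (U n)) ∧
      (∀ n, L n ⊆ L (n + 1)) ∧ (⋃ n, L n) = D ∧
      (∀ n, CpSub (U (n + 1)) (U n)) ∧ (⋂ n, U n) = closure D ∧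
      (∀ n, L n ⊆ Dn (m₁ + n) ∧ Dn (m₁ + n) ⊆ U n) := by
  have hI_mono : Monotone I := monotone_nat_of_le_succ fun n => subset_closure.trans (hIsub n).2
  have hI_D : ∀ j, closure (I j) ⊆ D := fun j =>
    (hIsub j).2.trans (hIun ▸ Set.subset_iUnion I (j + 1))
  choose g hg using fun j => hK _ (hI_D j) (hIsub j).1
  obtain ⟨a, ha_mono, ha_tendsto, hga⟩ := exists_monotone_tendsto_atTop_le_add g
  obtain ⟨e, he_anti, he_tendsto, hδe⟩ :=
    exists_strictAnti_tendsto_zero_gt ((tendsto_add_atTop_iff_nat (g 0)).2 hH)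
  have he_pos : ∀ n, 0 < e n := fun n =>
    (he_anti.antitone.le_of_tendsto he_tendsto (n + 1)).trans_lt (he_anti n.lt_succ_self)
  refine ⟨g 0, fun n => I (a n), fun n => thickening (e n) (closure D), fun n => hIdom (a n),
    fun n => isCDomain_thickening_closure hD (he_pos n), fun n => hI_mono (ha_mono n.le_succ),
    (hI_mono.iUnion_comp_tendsto_atTop ha_tendsto).trans hIun,
    fun n => cpSub_thickening hDb.closure (he_pos n) (he_anti n.lt_succ_self),
    (iInter_thickening_eq_closure he_pos he_tendsto _).trans closure_closure, fun n => ⟨?_, ?_⟩⟩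
  · exact subset_closure.trans (hg (a n) (g 0 + n) (hga n))
  · rw [add_comm]
    exact subset_closure.trans (subset_thickening_of_hausdorffDist_lt (hDnb _).closure
      hDb.closure hD.2.nonempty.closure (hδe n))

/-- Under the same assumptions as in the squeezing lemma, there exist `m₁` and sequences of
domains `(L n)` increasing to `D` and `(U n)` with `U (n+1) ⋐ U n` and `⋂ n, U n = closure D`
such that `L n ⊆ Dn (m₁ + n) ⊆ U n` for all `n` (with `0`-based indexing of the sequences,
corresponding to `L_n ⊆ D_{m₁+n-1} ⊆ U_n` for `1`-based indexing in the paper). -/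
theorem exists_squeezing_sequences
    {m : ℕ} (D : Set (Cn m)) (hD : IsCDomain D) (hDb : IsBounded D)
    (E I : ℕ → Set (Cn m))
    (hEdom : ∀ n, IsCDomain (E n)) (hEsub : ∀ n, CpSub (E (n + 1)) (E n))
    (hEint : ⋂ n, E n = closure D)
    (hIdom : ∀ n, IsCDomain (I n)) (hIsub : ∀ n, CpSub (I n) (I (n + 1)))
    (hIun : ⋃ n, I n = D)
    (Dn : ℕ → Set (Cn m))
    (hDn : ∀ n, IsCDomain (Dn n)) (hDnb : ∀ n, IsBounded (Dn n))
    (hH : Tendsto (fun n => hausdorffDist (closure (Dn n)) (closure D)) atTop (nhds 0))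
    (hK : ∀ K : Set (Cn m), K ⊆ D → IsCompact K → ∃ n₀ : ℕ, ∀ n ≥ n₀, K ⊆ Dn n) :
    ∃ (m₁ : ℕ) (L U : ℕ → Set (Cn m)),
      (∀ n, IsCDomain (L n)) ∧ (∀ n, IsCDomain (U n)) ∧
      (∀ n, L n ⊆ L (n + 1)) ∧ (⋃ n, L n) = D ∧
      (∀ n, CpSub (U (n + 1)) (U n)) ∧ (⋂ n, U n) = closure D ∧
      (∀ n, L n ⊆ Dn (m₁ + n) ∧ Dn (m₁ + n) ⊆ U n) :=
  exists_squeezing_sequences_general D hD hDb I hIdom hIsub hIun Dn hDnb hH hK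
end
end
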